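/- arXiv:2410.09630 — 2 statements merged into one kernel-verified Lean document; each statement's English description precedes it below -/
import Mathlib

section
/- Let V be a measure space with finite measure, K ≥ 0, and for each y ∈ V let g(y,·) : ℝ → ℝ be absolutely continuous with g(y,t) = 0 for t ≤ 0. Then for any τ' > 0 and q ∈ ℕ₀ (with g(·, t), ∂_t g measurable and square-integrable appropriately), one has ∫_V sup_{τ ∈ (0,τ')} |∂_t^q g(y,τ)|² dμ(y) ≤ 2 ‖∂_t^q g‖_{L²((0,τ')×V)} · ‖∂_t^{q+1} g‖_{L²((0,τ')×V)}, assuming ∂_t^q g(y,0) = 0 for a.e. y. -/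
open MeasureTheory

private lemma abs_le_sq_add_one (a : ℝ) : |a| ≤ a ^ 2 + 1 := by
  nlinarith [sq_nonneg (|a| - 1), abs_nonneg a, sq_abs a]

/-- `u` plays the role of `∂_t^q g` and `v` that of `∂_t^{q+1} g`. -/
theorem sup_in_time_bound
    {V : Type*} [MeasurableSpace V] (μ : Measure V) [IsFiniteMeasure μ]
    (u v : V → ℝ → ℝ) (τ' : ℝ) (hτ' : 0 < τ')
    (hderiv : ∀ y t, HasDerivAt (u y) (v y t) t)
    (hcausal : ∀ y t, t ≤ 0 → u y t = 0)
    (hmeas_u : Measurable (Function.uncurry u)) (hmeas_v : Measurable (Function.uncurry v))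
    (hint_u : Integrable (fun p : V × ℝ => (u p.1 p.2) ^ 2)
      (μ.prod (volume.restrict (Set.Ioo 0 τ'))))
    (hint_v : Integrable (fun p : V × ℝ => (v p.1 p.2) ^ 2)
      (μ.prod (volume.restrict (Set.Ioo 0 τ')))) :
    ∫ y, (⨆ τ ∈ Set.Ioo (0:ℝ) τ', (u y τ) ^ 2) ∂μ ≤
      2 * Real.sqrt (∫ y, ∫ τ in Set.Ioo (0:ℝ) τ', (u y τ) ^ 2 ∂volume ∂μ) *
        Real.sqrt (∫ y, ∫ τ in Set.Ioo (0:ℝ) τ', (v y τ) ^ 2 ∂volume ∂μ) := by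
  set S : Set ℝ := Set.Ioo (0:ℝ) τ' with hS
  set ν : Measure ℝ := volume.restrict S with hν
  haveI : IsFiniteMeasure ν := by
    constructor
    rw [hν, Measure.restrict_apply_univ, hS, Real.volume_Ioo]
    exact ENNReal.ofReal_lt_top
  set P : Measure (V × ℝ) := μ.prod ν with hP
  -- joint measurability facts
  have hmu : Measurable (fun p : V × ℝ => u p.1 p.2) := hmeas_u
  have hmv : Measurable (fun p : V × ℝ => v p.1 p.2) := hmeas_v
  -- the product function H
  set H : V × ℝ → ℝ := fun p => 2 * |u p.1 p.2| * |v p.1 p.2| with hH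
  have hH_meas : Measurable H := ((measurable_const.mul hmu.abs).mul hmv.abs)
  have hH_bound : ∀ p : V × ℝ, ‖H p‖ ≤ (u p.1 p.2) ^ 2 + (v p.1 p.2) ^ 2 := by
    intro p
    have h2 : (0:ℝ) ≤ 2 * |u p.1 p.2| * |v p.1 p.2| := by positivity
    rw [hH, Real.norm_of_nonneg h2]
    nlinarith [sq_nonneg (|u p.1 p.2| - |v p.1 p.2|), sq_abs (u p.1 p.2), sq_abs (v p.1 p.2)]
  have hH_int : Integrable H P := by
    refine (hint_u.add hint_v).mono' hH_meas.aestronglyMeasurable ?_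
    exact Filter.Eventually.of_forall hH_bound
  -- F y = ∫ t in S, 2|u||v|
  set F : V → ℝ := fun y => ∫ t in S, 2 * |u y t| * |v y t| with hF
  have hF_nonneg : ∀ y, 0 ≤ F y := fun y =>
    integral_nonneg (fun t => by positivity)
  have hF_int : Integrable F μ := hH_int.integral_prod_left
  -- Step 1: a.e. pointwise bound of the sup by F
  have key : ∀ᵐ y ∂μ, (⨆ τ ∈ S, (u y τ) ^ 2) ≤ F y := by
    filter_upwards [hint_v.prod_right_ae, hH_int.prod_right_ae] with y hvy hHy
    -- hvy : Integrable (fun t => v y t ^ 2) ν, hHy : Integrable (fun t => H (y, t)) ν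
    have hu_cont : Continuous (u y) :=
      continuous_iff_continuousAt.2 fun s => (hderiv y s).continuousAt
    have hvy_meas : Measurable (v y) := hmeas_v.of_uncurry_left
    have hvy_int : Integrable (v y) ν := by
      refine (hvy.add (integrable_const 1)).mono'
        hvy_meas.aestronglyMeasurable (Filter.Eventually.of_forall fun t => ?_)
      simpa [Real.norm_eq_abs] using abs_le_sq_add_one (v y t)
    refine Real.iSup_le (fun τ => Real.iSup_le (fun hτ => ?_) (hF_nonneg y)) (hF_nonneg y)
    -- τ ∈ S
    have hτ0 : 0 < τ := hτ.1
    have hττ' : τ < τ' := hτ.2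
    have hsub : Set.Ioc 0 τ ⊆ S := fun s hs => ⟨hs.1, lt_of_le_of_lt hs.2 hττ'⟩
    -- FTC
    have hsq : ∀ s, HasDerivAt (fun s => u y s ^ 2) (2 * u y s * v y s) s := by
      intro s
      have h := (hderiv y s).mul (hderiv y s)
      have : (fun s => u y s ^ 2) = fun s => u y s * u y s := by
        funext x; ring
      rw [this]
      exact h.congr_deriv (by ring)
    have hint_uv : IntegrableOn (fun s => 2 * u y s * v y s) (Set.Ioc 0 τ) volume := by
      obtain ⟨C, hC⟩ := (isCompact_Icc (a := (0:ℝ)) (b := τ)).exists_bound_of_continuousOn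
        hu_cont.continuousOn
      have hvint' : IntegrableOn (v y) (Set.Ioc 0 τ) volume :=
        IntegrableOn.mono_set hvy_int hsub
      refine ((hvint'.abs.const_mul (2 * C)).mono'
        ((measurable_const.mul (hmeas_u.of_uncurry_left)).mul hvy_meas).aestronglyMeasurable
        ?_)
      filter_upwards [ae_restrict_mem measurableSet_Ioc] with s hs
      have hCs : ‖u y s‖ ≤ C := hC s ⟨le_of_lt hs.1, hs.2⟩
      have hC0 : 0 ≤ C := le_trans (norm_nonneg _) hCs
      calc ‖2 * u y s * v y s‖ = 2 * ‖u y s‖ * ‖v y s‖ := by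
            simp [Real.norm_eq_abs, abs_mul, mul_assoc]
        _ ≤ 2 * C * ‖v y s‖ := by
            have := norm_nonneg (v y s)
            nlinarith [norm_nonneg (u y s)]
        _ = 2 * C * |v y s| := by rw [Real.norm_eq_abs]
    have hIInt : IntervalIntegrable (fun s => 2 * u y s * v y s) volume 0 τ := by
      rw [intervalIntegrable_iff_integrableOn_Ioc_of_le hτ0.le]
      exact hint_uv
    have hFTC : ∫ s in (0:ℝ)..τ, 2 * u y s * v y s ∂volume = u y τ ^ 2 := by
      rw [intervalIntegral.integral_eq_sub_of_hasDerivAt (fun s _ => hsq s) hIInt]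
      rw [hcausal y 0 le_rfl]
      ring
    -- bound the interval integral by F y
    have h1 : ∫ s in (0:ℝ)..τ, 2 * u y s * v y s ∂volume ≤
        ∫ s in Set.Ioc 0 τ, 2 * |u y s| * |v y s| ∂volume := by
      rw [intervalIntegral.integral_of_le hτ0.le]
      calc ∫ s in Set.Ioc 0 τ, 2 * u y s * v y s ∂volume
          ≤ |∫ s in Set.Ioc 0 τ, 2 * u y s * v y s ∂volume| := le_abs_self _
        _ ≤ ∫ s in Set.Ioc 0 τ, 2 * |u y s| * |v y s| ∂volume := by
            simpa [Real.norm_eq_abs, abs_mul, abs_two] using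
              norm_integral_le_integral_norm (μ := volume.restrict (Set.Ioc 0 τ))
                (f := fun s => 2 * u y s * v y s)
    have hHy' : IntegrableOn (fun t => 2 * |u y t| * |v y t|) S volume := hHy
    have h2 : ∫ s in Set.Ioc 0 τ, 2 * |u y s| * |v y s| ∂volume ≤ F y := by
      refine setIntegral_mono_set hHy' ?_ (HasSubset.Subset.eventuallyLE hsub)
      exact Filter.Eventually.of_forall fun s => by positivity
    calc u y τ ^ 2 = ∫ s in (0:ℝ)..τ, 2 * u y s * v y s ∂volume := hFTC.symm
      _ ≤ ∫ s in Set.Ioc 0 τ, 2 * |u y s| * |v y s| ∂volume := h1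
      _ ≤ F y := h2
  -- Step 2: integrate the bound
  have step2 : ∫ y, (⨆ τ ∈ S, (u y τ) ^ 2) ∂μ ≤ ∫ y, F y ∂μ := by
    refine integral_mono_of_nonneg ?_ hF_int key
    refine Filter.Eventually.of_forall fun y => ?_
    exact Real.iSup_nonneg fun τ => Real.iSup_nonneg fun _ => sq_nonneg _
  -- Step 3: Fubini
  have step3 : ∫ y, F y ∂μ = ∫ p, H p ∂P := (integral_prod H hH_int).symm
  -- Step 4: Cauchy–Schwarz on the product space
  have hpq : (2:ℝ).HolderConjugate 2 := by
    rw [Real.holderConjugate_iff]; norm_num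
  have hmemu : MemLp (fun p : V × ℝ => u p.1 p.2) 2 P :=
    (memLp_two_iff_integrable_sq hmu.aestronglyMeasurable).2 hint_u
  have hmemv : MemLp (fun p : V × ℝ => v p.1 p.2) 2 P :=
    (memLp_two_iff_integrable_sq hmv.aestronglyMeasurable).2 hint_v
  have hCS := integral_mul_norm_le_Lp_mul_Lq (μ := P) hpq
    (by simpa using hmemu) (by simpa using hmemv)
  -- rewrite rpow as sqrt and squares
  have hru : ∀ p : V × ℝ, ‖u p.1 p.2‖ ^ (2:ℝ) = u p.1 p.2 ^ 2 := fun p => by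
    rw [Real.rpow_two]
    simp [Real.norm_eq_abs, sq_abs]
  have hrv : ∀ p : V × ℝ, ‖v p.1 p.2‖ ^ (2:ℝ) = v p.1 p.2 ^ 2 := fun p => by
    rw [Real.rpow_two]
    simp [Real.norm_eq_abs, sq_abs]
  have hiu : ∫ p, ‖u p.1 p.2‖ ^ (2:ℝ) ∂P = ∫ y, ∫ τ in S, (u y τ) ^ 2 ∂volume ∂μ := by
    rw [integral_congr_ae (Filter.Eventually.of_forall hru)]
    exact integral_prod _ hint_u
  have hiv : ∫ p, ‖v p.1 p.2‖ ^ (2:ℝ) ∂P = ∫ y, ∫ τ in S, (v y τ) ^ 2 ∂volume ∂μ := by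
    rw [integral_congr_ae (Filter.Eventually.of_forall hrv)]
    exact integral_prod _ hint_v
  have step4 : ∫ p, H p ∂P ≤
      2 * Real.sqrt (∫ y, ∫ τ in S, (u y τ) ^ 2 ∂volume ∂μ) *
        Real.sqrt (∫ y, ∫ τ in S, (v y τ) ^ 2 ∂volume ∂μ) := by
    have habsH : ∫ p, H p ∂P = 2 * ∫ p, ‖u p.1 p.2‖ * ‖v p.1 p.2‖ ∂P := by
      rw [← integral_const_mul]
      refine integral_congr_ae (Filter.Eventually.of_forall fun p => ?_)
      simp [hH, Real.norm_eq_abs, mul_assoc]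
    rw [habsH, mul_assoc]
    refine mul_le_mul_of_nonneg_left ?_ (by norm_num)
    calc ∫ p, ‖u p.1 p.2‖ * ‖v p.1 p.2‖ ∂P
        ≤ (∫ p, ‖u p.1 p.2‖ ^ (2:ℝ) ∂P) ^ (1/(2:ℝ)) *
          (∫ p, ‖v p.1 p.2‖ ^ (2:ℝ) ∂P) ^ (1/(2:ℝ)) := hCS
      _ = Real.sqrt (∫ y, ∫ τ in S, (u y τ) ^ 2 ∂volume ∂μ) *
          Real.sqrt (∫ y, ∫ τ in S, (v y τ) ^ 2 ∂volume ∂μ) := by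
          rw [hiu, hiv]; rw [Real.sqrt_eq_rpow, Real.sqrt_eq_rpow]
  calc ∫ y, (⨆ τ ∈ S, (u y τ) ^ 2) ∂μ ≤ ∫ y, F y ∂μ := step2
    _ = ∫ p, H p ∂P := step3
    _ ≤ _ := step4
end

section
/- Let γ_ε := ω_M² ε² / (1 − ρ₁ε²/ρ₀) with ω_M, ρ₀, ρ₁ > 0, and let η₂ < 0 be a fixed real constant. For ε > 0 sufficiently small, the quadratic equation λ² − η₂ γ_ε λ + γ_ε = 0 has two complex conjugate roots λ^±, and these satisfy |Re(λ^±) − η₂ γ_ε/2| = 0 exactly, Re(λ^±) = η₂ γ_ε / 2 < 0, and |Im(λ^±) ∓ ω_M ε| ≤ C ε³ for a constant C independent of ε. -/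
set_option maxHeartbeats 1000000 in
theorem characteristic_roots_asymptotics
    (ωM ρ₀ ρ₁ η₂ : ℝ) (hω : 0 < ωM) (hρ₀ : 0 < ρ₀) (hρ₁ : 0 < ρ₁) (hη₂ : η₂ < 0) :
    ∃ C > (0:ℝ), ∃ ε₀ > (0:ℝ), ∀ ε : ℝ, 0 < ε → ε < ε₀ →
      ∀ γ : ℝ, γ = ωM ^ 2 * ε ^ 2 / (1 - ρ₁ * ε ^ 2 / ρ₀) →
      ∀ lamP lamM : ℂ,
        lamP = (η₂ * γ / 2 : ℝ) + Complex.I * (Real.sqrt (γ - η₂ ^ 2 * γ ^ 2 / 4) : ℝ) →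
        lamM = (η₂ * γ / 2 : ℝ) - Complex.I * (Real.sqrt (γ - η₂ ^ 2 * γ ^ 2 / 4) : ℝ) →
        ((η₂ * γ) ^ 2 - 4 * γ < 0 ∧
         lamM = (starRingEnd ℂ) lamP ∧
         lamP ^ 2 - (η₂ * γ : ℝ) * lamP + (γ : ℝ) = 0 ∧
         lamM ^ 2 - (η₂ * γ : ℝ) * lamM + (γ : ℝ) = 0 ∧
         lamP.re = η₂ * γ / 2 ∧ lamM.re = η₂ * γ / 2 ∧ lamP.re < 0 ∧
         |lamP.im - ωM * ε| ≤ C * ε ^ 3 ∧ |lamM.im + ωM * ε| ≤ C * ε ^ 3) := by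
  have hη₂' : 0 < |η₂| := abs_pos.mpr hη₂.ne
  obtain ⟨K, hKdef⟩ : ∃ K : ℝ, K = 2 * ωM ^ 2 * ρ₁ / ρ₀ + η₂ ^ 2 * ωM ^ 4 := ⟨_, rfl⟩
  have hK : 0 < K := by rw [hKdef]; positivity
  refine ⟨K / ωM, by positivity,
    min (Real.sqrt (ρ₀ / (2 * ρ₁))) (Real.sqrt 2 / (ωM * |η₂|)), ?_, ?_⟩
  · apply lt_min <;> positivity
  intro ε hε hεlt γ hγ lamP lamM hP hM
  have h1 : ε ^ 2 < ρ₀ / (2 * ρ₁) := by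
    have := lt_of_lt_of_le hεlt (min_le_left _ _)
    rwa [show ε = |ε| from (abs_of_pos hε).symm, ← Real.sqrt_sq_eq_abs,
      Real.sqrt_lt_sqrt_iff (by positivity)] at this
  have h2 : η₂ ^ 2 * ωM ^ 2 * ε ^ 2 < 2 := by
    have h := lt_of_lt_of_le hεlt (min_le_right _ _)
    have h' : ε * (ωM * |η₂|) < Real.sqrt 2 := by
      rw [← lt_div_iff₀ (by positivity)]; exact h
    have h'' := (Real.lt_sqrt (by positivity)).mp h'
    rw [mul_pow, mul_pow, sq_abs] at h''
    linarith [h'']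
  have h1' : 2 * ρ₁ * ε ^ 2 < ρ₀ := by
    rw [lt_div_iff₀ (by positivity)] at h1; linarith
  have hx : ρ₁ * ε ^ 2 / ρ₀ < 1 / 2 := by
    rw [div_lt_iff₀ hρ₀]; linarith
  have hd2 : (1:ℝ)/2 < 1 - ρ₁ * ε ^ 2 / ρ₀ := by linarith
  have hxpos : 0 < ρ₁ * ε ^ 2 / ρ₀ := by positivity
  have hd1 : 1 - ρ₁ * ε ^ 2 / ρ₀ < 1 := by linarith
  have hd0 : 0 < 1 - ρ₁ * ε ^ 2 / ρ₀ := by linarith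
  have hγpos : 0 < γ := by rw [hγ]; exact div_pos (by positivity) hd0
  have hγd : γ * (1 - ρ₁ * ε ^ 2 / ρ₀) = ωM ^ 2 * ε ^ 2 := by
    rw [hγ, div_mul_cancel₀ _ hd0.ne']
  have hγle : γ ≤ 2 * ωM ^ 2 * ε ^ 2 := by
    linarith only [hγd, mul_lt_mul_of_pos_left hd2 hγpos]
  have hγge : ωM ^ 2 * ε ^ 2 ≤ γ := by
    linarith only [hγd, mul_lt_mul_of_pos_left hd1 hγpos]
  have hγ4 : η₂ ^ 2 * γ < 4 := by
    have p := mul_nonneg (sq_nonneg η₂) (show (0:ℝ) ≤ 2 * ωM ^ 2 * ε ^ 2 - γ by linarith)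
    linarith only [p, h2]
  have hq : 0 < γ * (4 - η₂ ^ 2 * γ) :=
    mul_pos hγpos (by linarith)
  have hdisc : (η₂ * γ) ^ 2 - 4 * γ < 0 := by linarith only [hq]
  have hA : 0 ≤ γ - η₂ ^ 2 * γ ^ 2 / 4 := by linarith only [hq]
  obtain ⟨s, hsdef⟩ : ∃ s : ℝ, s = Real.sqrt (γ - η₂ ^ 2 * γ ^ 2 / 4) := ⟨_, rfl⟩
  rw [← hsdef] at hP hM
  have hs0 : 0 ≤ s := hsdef ▸ Real.sqrt_nonneg _
  have hs2 : s ^ 2 = γ - η₂ ^ 2 * γ ^ 2 / 4 := hsdef ▸ Real.sq_sqrt hA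
  have hA2 : γ - ωM ^ 2 * ε ^ 2 ≤ 2 * ωM ^ 2 * ρ₁ / ρ₀ * ε ^ 4 := by
    rw [div_mul_eq_mul_div, le_div_iff₀ hρ₀]
    have hkey : (γ - ωM ^ 2 * ε ^ 2) * ρ₀ = γ * (ρ₁ * ε ^ 2) := by
      have h := congrArg (· * ρ₀) hγd
      field_simp at h
      linarith
    rw [hkey]
    have h3 : (0:ℝ) ≤ (2 * ωM ^ 2 * ε ^ 2 - γ) * (ρ₁ * ε ^ 2) :=
      mul_nonneg (by linarith) (by positivity)
    linarith only [h3]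
  have hB : η₂ ^ 2 * γ ^ 2 / 4 ≤ η₂ ^ 2 * ωM ^ 4 * ε ^ 4 := by
    have h4 : γ ^ 2 ≤ (2 * ωM ^ 2 * ε ^ 2) ^ 2 := by
      have := mul_self_le_mul_self hγpos.le hγle
      linarith only [this]
    linarith only [mul_le_mul_of_nonneg_left h4 (sq_nonneg η₂)]
  have hB0 : 0 ≤ η₂ ^ 2 * γ ^ 2 / 4 := by positivity
  have hpos1 : (0:ℝ) ≤ η₂ ^ 2 * ωM ^ 4 * ε ^ 4 := by positivity
  have hpos2 : (0:ℝ) ≤ 2 * ωM ^ 2 * ρ₁ / ρ₀ * ε ^ 4 := by positivity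
  have hup : s ^ 2 ≤ (ωM * ε) ^ 2 + K * ε ^ 4 := by
    rw [hs2, hKdef]; linarith only [hA2, hB0, hpos1]
  have hlo : (ωM * ε) ^ 2 - K * ε ^ 4 ≤ s ^ 2 := by
    rw [hs2, hKdef]; linarith only [hγge, hB, hpos2]
  have ht : 0 < ωM * ε := by positivity
  have hCε : 0 < K / ωM * ε ^ 3 := by positivity
  have hKt : K * ε ^ 4 = (K / ωM * ε ^ 3) * (ωM * ε) := by
    field_simp
  have hest : |s - ωM * ε| ≤ K / ωM * ε ^ 3 := by
    rw [abs_le]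
    constructor
    · by_cases hc : ωM * ε ≤ K / ωM * ε ^ 3
      · linarith
      · push_neg at hc
        by_contra h
        push_neg at h
        have p1 : 0 < (ωM * ε - K / ωM * ε ^ 3 - s) * (ωM * ε - K / ωM * ε ^ 3 + s) :=
          mul_pos (by linarith) (by linarith)
        have p2 : 0 < (K / ωM * ε ^ 3) * (ωM * ε - K / ωM * ε ^ 3) :=
          mul_pos hCε (by linarith)
        linarith only [p1, p2, hlo, hKt]
    · by_contra h
      push_neg at h
      have p1 : 0 < (s - ωM * ε - K / ωM * ε ^ 3) * (s + ωM * ε + K / ωM * ε ^ 3) :=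
        mul_pos (by linarith) (by linarith)
      have p2 : 0 < (K / ωM * ε ^ 3) * (ωM * ε) := mul_pos hCε ht
      have p3 : 0 < (K / ωM * ε ^ 3) * (K / ωM * ε ^ 3) := mul_pos hCε hCε
      linarith only [p1, p2, p3, hup, hKt]
  have hPre : lamP.re = η₂ * γ / 2 := by rw [hP]; simp
  have hMre : lamM.re = η₂ * γ / 2 := by rw [hM]; simp
  have hPim : lamP.im = s := by rw [hP]; simp
  have hMim : lamM.im = -s := by rw [hM]; simp
  have hs2C : (s:ℂ) ^ 2 = (γ:ℂ) - (η₂:ℂ) ^ 2 * (γ:ℂ) ^ 2 / 4 := by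
    have h5 : ((s ^ 2 : ℝ) : ℂ) = ((γ - η₂ ^ 2 * γ ^ 2 / 4 : ℝ) : ℂ) := by rw [hs2]
    push_cast at h5
    exact h5
  refine ⟨hdisc, ?_, ?_, ?_, hPre, hMre, ?_, ?_, ?_⟩
  · rw [hP, hM]
    simp only [map_add, map_mul, Complex.conj_I, Complex.conj_ofReal]
    ring
  · rw [hP]; push_cast
    linear_combination ((s:ℂ)) ^ 2 * Complex.I_sq - hs2C
  · rw [hM]; push_cast
    linear_combination ((s:ℂ)) ^ 2 * Complex.I_sq - hs2C
  · rw [hPre]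
    have : η₂ * γ < 0 := mul_neg_of_neg_of_pos hη₂ hγpos
    linarith
  · rw [hPim]; exact hest
  · rw [hMim]
    have habs : |-s + ωM * ε| = |s - ωM * ε| := by rw [← abs_neg]; ring_nf
    rw [habs]; exact hest
end
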